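/- Let n ≥ 2 be a fixed integer. Then liminf_{q→∞} C(n,q)/(q^n/n) ≥ ((n−1)/n)^{n−1}, where the liminf is taken over integers q tending to infinity. -/

import Mathlib

/-- Two words `u` and `v` of length `n` over alphabet `F` are overlapping if some
non-empty proper prefix of one equals a non-empty proper suffix of the other. -/
def Overlapping {F : Type*} {n : ℕ} (u v : Fin n → F) : Prop :=
  ∃ m : ℕ, ∃ _h1 : 0 < m, ∃ h2 : m < n,
    ((∀ i : ℕ, ∀ hi : i < m, u ⟨i, hi.trans h2⟩ = v ⟨n - m + i, by omega⟩) ∨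
     (∀ i : ℕ, ∀ hi : i < m, v ⟨i, hi.trans h2⟩ = u ⟨n - m + i, by omega⟩))

/-- A code `C ⊆ F^n` is non-overlapping if every two (not necessarily distinct)
codewords are non-overlapping. -/
def NonOverlappingCode {F : Type*} {n : ℕ} (C : Set (Fin n → F)) : Prop :=
  ∀ u ∈ C, ∀ v ∈ C, ¬ Overlapping u v

/-- `maxNOCode n q` is `C(n,q)`, the maximum cardinality of a non-overlapping
`q`-ary code of length `n`. -/
noncomputable def maxNOCode (n q : ℕ) : ℕ :=
  sSup {m | ∃ C : Set (Fin n → Fin q), NonOverlappingCode C ∧ C.ncard = m}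

/-!
Choose a set `S` of `k` "marker" letters and take all words whose first letter is a marker
and whose other letters are not. Every non-empty prefix of such a word starts with a marker,
while every proper non-empty suffix starts with a non-marker, so the code is non-overlapping;
it has `k (q - k)^(n-1)` words. Taking `k = ⌊q/n⌋`, its size divided by `q^n/n` is
`n x (1 - x)^(n-1)` with `x = ⌊q/n⌋/q → 1/n`, which tends to `((n-1)/n)^(n-1)`.
-/

open Filter Topology Finset

def firstLetterCode {F : Type*} (S : Set F) (n : ℕ) : Set (Fin n → F) :=
  {w | ∀ i, w i ∈ S ↔ i.val = 0}

theorem nonOverlappingCode_firstLetterCode {F : Type*} (S : Set F) (n : ℕ) :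
    NonOverlappingCode (firstLetterCode S n) := by
  rintro u hu v hv ⟨m, hm, hmn, h | h⟩
  · have := (hv _).mp (h 0 hm ▸ (hu _).mpr rfl)
    simp only [add_zero] at this
    omega
  · have := (hu _).mp (h 0 hm ▸ (hv _).mpr rfl)
    simp only [add_zero] at this
    omega

theorem ncard_firstLetterCode {F : Type*} [Fintype F] (S : Finset F) {n : ℕ} (hn : 0 < n) :
    (firstLetterCode (S : Set F) n).ncard = #S * (Fintype.card F - #S) ^ (n - 1) := by
  classical
  obtain ⟨m, rfl⟩ : ∃ m, n = m + 1 := ⟨n - 1, by omega⟩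
  have e : firstLetterCode (S : Set F) (m + 1) ≃ ∀ i : Fin (m + 1), {x // x ∈ S ↔ i.val = 0} :=
    Equiv.subtypePiEquivPi (p := fun (i : Fin (m + 1)) x => x ∈ S ↔ i.val = 0)
  rw [← Nat.card_coe_set_eq, Nat.card_congr e, Nat.card_pi, Fin.prod_univ_succ]
  simp [Fintype.card_subtype_compl]

theorem ncard_le_alphabet_pow {n q : ℕ} (C : Set (Fin n → Fin q)) : C.ncard ≤ q ^ n := by
  simpa using Set.ncard_le_card C

theorem maxNOCode_le_pow (n q : ℕ) : maxNOCode n q ≤ q ^ n :=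
  csSup_le' <| by
    rintro _ ⟨C, -, rfl⟩
    exact ncard_le_alphabet_pow C

theorem ncard_le_maxNOCode {n q : ℕ} {C : Set (Fin n → Fin q)} (hC : NonOverlappingCode C) :
    C.ncard ≤ maxNOCode n q :=
  le_csSup ⟨q ^ n, by rintro _ ⟨D, -, rfl⟩; exact ncard_le_alphabet_pow D⟩ ⟨C, hC, rfl⟩

theorem mul_sub_pow_le_maxNOCode {n q k : ℕ} (hn : 0 < n) (hk : k ≤ q) :
    k * (q - k) ^ (n - 1) ≤ maxNOCode n q := by
  let S : Finset (Fin q) := {x | x < k}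
  have hS : #S = k := by simp [S, Fin.card_filter_val_lt, hk]
  have := ncard_le_maxNOCode (nonOverlappingCode_firstLetterCode (S : Set (Fin q)) n)
  rwa [ncard_firstLetterCode _ hn, hS, Fintype.card_fin] at this

theorem tendsto_nat_div_div_atTop (n : ℕ) :
    Tendsto (fun q : ℕ => ((q / n : ℕ) : ℝ) / q) atTop (𝓝 (1 / n)) := by
  have := (tendsto_nat_floor_mul_div_atTop (a := 1 / (n : ℝ)) (by positivity)).comp
    tendsto_natCast_atTop_atTop
  refine this.congr fun q => ?_
  simp only [Function.comp, one_div, inv_mul_eq_div, Nat.floor_div_eq_div]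

theorem mul_sub_pow_div_eq {n : ℕ} (hn : 0 < n) {q k : ℝ} (hq : q ≠ 0) :
    k * (q - k) ^ (n - 1) / (q ^ n / n) = n * (k / q) * (1 - k / q) ^ (n - 1) := by
  obtain ⟨m, rfl⟩ : ∃ m, n = m + 1 := ⟨n - 1, by omega⟩
  rw [Nat.add_sub_cancel, one_sub_div hq, div_pow, pow_succ]
  field_simp

/-- Theorem 3 of Blackburn, "Non-overlapping codes": for fixed `n ≥ 2`,
`liminf_{q→∞} C(n,q)/(q^n/n) ≥ ((n-1)/n)^{n-1}`. -/
theorem stmt10 {n : ℕ} (hn : 2 ≤ n) :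
    (((n : ℝ) - 1) / (n : ℝ)) ^ (n - 1)
      ≤ Filter.liminf (fun q : ℕ => (maxNOCode n q : ℝ) / ((q : ℝ) ^ n / (n : ℝ)))
          Filter.atTop := by
  have hn0 : 0 < n := by omega
  have hlim : Tendsto (fun q : ℕ => (n : ℝ) * (((q / n : ℕ) : ℝ) / q) *
      (1 - ((q / n : ℕ) : ℝ) / q) ^ (n - 1)) atTop (𝓝 ((((n : ℝ) - 1) / n) ^ (n - 1))) := by
    have h := tendsto_nat_div_div_atTop n
    convert (tendsto_const_nhds.mul h).mul ((tendsto_const_nhds.sub h).pow (n - 1)) using 2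
    field_simp
  have hlower : ∀ᶠ q : ℕ in atTop,
      (n : ℝ) * (((q / n : ℕ) : ℝ) / q) * (1 - ((q / n : ℕ) : ℝ) / q) ^ (n - 1)
        ≤ (maxNOCode n q : ℝ) / ((q : ℝ) ^ n / n) := by
    filter_upwards [eventually_gt_atTop 0] with q hq
    have hk : q / n ≤ q := Nat.div_le_self q n
    rw [← mul_sub_pow_div_eq hn0 (by exact_mod_cast hq.ne'), ← Nat.cast_sub hk]
    gcongr
    exact_mod_cast mul_sub_pow_le_maxNOCode hn0 hk
  have hupper (q : ℕ) : (maxNOCode n q : ℝ) / ((q : ℝ) ^ n / n) ≤ n := by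
    refine div_le_of_le_mul₀ (by positivity) (by positivity) ?_
    rw [mul_div_cancel₀ _ (by positivity)]
    exact_mod_cast maxNOCode_le_pow n q
  rw [← hlim.liminf_eq]
  exact liminf_le_liminf hlower hlim.isBoundedUnder_ge (isCoboundedUnder_ge_of_le _ hupper)
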